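/- arXiv:2106.05955 — 2 statements merged into one kernel-verified Lean document; each statement's English description precedes it below -/
import Mathlib

section
/- Let (S,d) be a metric space, R ⊆ S, and let f : (c,d) × R → (a,b) be differentiable in its first variable with ∂f/∂x(x,s) > δ > 0 for all x, s. For each s let f_s⁻¹ denote the inverse of x ↦ f(x,s). If there exist constants C, D such that |f(x,s₁) − f(x,s₂)| ≤ C(d(s₁,s₂) + D) for all x, s₁, s₂, then for all y ∈ (a,b), |f_{s₁}⁻¹(y) − f_{s₂}⁻¹(y)| ≤ (C/δ)(d(s₁,s₂) + D). -/
open Set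

/-- Inverse function lemma with a parameter (Lemma A.1):
if `f (·, s)` maps `(c,d)` into `(a,b)` with derivative `> δ > 0`, `g s` is an inverse of
`f (·, s)`, and `f` is "Lipschitz-up-to-D" in the parameter `s`, then the inverses satisfy
`|g s₁ y - g s₂ y| ≤ (C/δ) (d(s₁,s₂) + D)`. -/
theorem inverse_function_with_parameter
    {S : Type*} [MetricSpace S] (R : Set S)
    (a b c d δ C D : ℝ) (hδ : 0 < δ)
    (f : ℝ → S → ℝ) (f' : ℝ → S → ℝ) (g : S → ℝ → ℝ)
    (hmap : ∀ x ∈ Ioo c d, ∀ s ∈ R, f x s ∈ Ioo a b)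
    (hderiv : ∀ x ∈ Ioo c d, ∀ s ∈ R, HasDerivAt (fun x => f x s) (f' x s) x)
    (hlow : ∀ x ∈ Ioo c d, ∀ s ∈ R, δ < f' x s)
    (hinv_left : ∀ s ∈ R, ∀ x ∈ Ioo c d, g s (f x s) = x)
    (hinv_right : ∀ s ∈ R, ∀ y ∈ Ioo a b, g s y ∈ Ioo c d ∧ f (g s y) s = y)
    (hpar : ∀ x ∈ Ioo c d, ∀ s₁ ∈ R, ∀ s₂ ∈ R,
      |f x s₁ - f x s₂| ≤ C * (dist s₁ s₂ + D)) :
    ∀ y ∈ Ioo a b, ∀ s₁ ∈ R, ∀ s₂ ∈ R,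
      |g s₁ y - g s₂ y| ≤ (C / δ) * (dist s₁ s₂ + D) := by
  intro y hy s₁ hs₁ s₂ hs₂
  obtain ⟨hx₁, hf₁⟩ := hinv_right s₁ hs₁ y hy
  obtain ⟨hx₂, hf₂⟩ := hinv_right s₂ hs₂ y hy
  set x₁ := g s₁ y
  set x₂ := g s₂ y
  -- expansivity of f(·,s) on Ioo c d
  have key : ∀ s ∈ R, ∀ u ∈ Ioo c d, ∀ v ∈ Ioo c d, u ≤ v →
      δ * (v - u) ≤ f v s - f u s := by
    intro s hs
    have hcont : ContinuousOn (fun x => f x s) (Ioo c d) := fun x hx =>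
      ((hderiv x hx s hs).continuousAt).continuousWithinAt
    have hdiff : DifferentiableOn ℝ (fun x => f x s) (interior (Ioo c d)) := by
      rw [interior_Ioo]
      exact fun x hx => ((hderiv x hx s hs).differentiableAt).differentiableWithinAt
    have hge : ∀ x ∈ interior (Ioo c d), δ ≤ deriv (fun x => f x s) x := by
      rw [interior_Ioo]
      intro x hx
      rw [(hderiv x hx s hs).deriv]
      exact (hlow x hx s hs).le
    exact (convex_Ioo c d).mul_sub_le_image_sub_of_le_deriv hcont hdiff hge
  have hexp : δ * |x₁ - x₂| ≤ |f x₁ s₂ - f x₂ s₂| := by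
    rcases le_total x₁ x₂ with h | h
    · have := key s₂ hs₂ x₁ hx₁ x₂ hx₂ h
      rw [abs_sub_comm x₁ x₂, abs_sub_comm (f x₁ s₂)]
      rw [abs_of_nonneg (by linarith), abs_of_nonneg (by nlinarith)]
      linarith
    · have := key s₂ hs₂ x₂ hx₂ x₁ hx₁ h
      rw [abs_of_nonneg (by linarith), abs_of_nonneg (by nlinarith)]
      linarith
  have hpar' : |f x₁ s₂ - f x₂ s₂| ≤ C * (dist s₁ s₂ + D) := by
    have : f x₁ s₂ - f x₂ s₂ = -(f x₁ s₁ - f x₁ s₂) := by rw [hf₁, hf₂]; ring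
    rw [this, abs_neg]
    exact hpar x₁ hx₁ s₁ hs₁ s₂ hs₂
  rw [div_mul_eq_mul_div, le_div_iff₀ hδ, mul_comm]
  linarith
end

section
/- Fix N ∈ ℕ, points x₁,…,x_N ∈ [0,∞), and a bounded Lipschitz kernel L : [0,∞)² → [0,∞) with ‖L‖_∞ ≤ K, and weights w_i ≥ 0. Consider the ODE system m_i'(t) = (w_i − m_i(t))·∑_{j=1}^N L(x_i, x_j) m_j(t) for i = 1,…,N with initial data 0 ≤ m_i(0) ≤ w_i. Then the solution exists for all t ≥ 0 and satisfies 0 ≤ m_i(t) ≤ w_i for all t ≥ 0 and all i. -/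
/-!
Truncate the field outside the box `Icc 0 w` by composing it with the nearest-point retraction
onto the box. The truncated field is globally Lipschitz and bounded, so Picard–Lindelöf on
every interval `[-T, T]` together with uniqueness gives a global solution. On the box faces the
truncated field points inward (`Aᵢⱼ ≥ 0` on the face `mᵢ = 0`, and the factor `wᵢ - mᵢ`
vanishes on `mᵢ = wᵢ`), so each coordinate stays in `[0, wᵢ]` for `t ≥ 0`; there the truncation
is inactive and the solution solves the original system.
-/

open Set

section ODE

variable {E : Type*} [NormedAddCommGroup E] [NormedSpace ℝ E] [CompleteSpace E]
  {F : E → E} {K B : NNReal}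

theorem exists_forall_mem_Ioo_hasDerivAt_of_lipschitzWith_of_norm_le
    (hF : LipschitzWith K F) (hB : ∀ x, ‖F x‖ ≤ B) (x₀ : E) (T : ℝ) :
    ∃ γ : ℝ → E, γ 0 = x₀ ∧ ∀ t ∈ Ioo (-T) T, HasDerivAt γ (F (γ t)) t := by
  have hpl : IsPicardLindelof (fun _ ↦ F) (tmin := -|T|) (tmax := |T|)
      ⟨0, by simp⟩ x₀ (B * ‖T‖₊) 0 B K :=
    .of_time_independent (fun x _ ↦ hB x) hF.lipschitzOnWith (by simp)
  obtain ⟨γ, hγ₀, hγ⟩ := hpl.exists_eq_forall_mem_Icc_hasDerivWithinAt₀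
  refine ⟨γ, hγ₀, fun t ht ↦ ?_⟩
  have ht' : t ∈ Ioo (-|T|) |T| := Ioo_subset_Ioo (by simp [le_abs_self]) (le_abs_self T) ht
  exact (hγ t (Ioo_subset_Icc_self ht')).hasDerivAt (Icc_mem_nhds ht'.1 ht'.2)

theorem exists_isIntegralCurve_of_lipschitzWith_of_norm_le
    (hF : LipschitzWith K F) (hB : ∀ x, ‖F x‖ ≤ B) (x₀ : E) :
    ∃ γ : ℝ → E, γ 0 = x₀ ∧ IsIntegralCurve γ (fun _ ↦ F) := by
  choose γ hγ₀ hγ using exists_forall_mem_Ioo_hasDerivAt_of_lipschitzWith_of_norm_le hF hB x₀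
  have hagree : ∀ T T' t, |t| < T → |t| < T' → γ T t = γ T' t := by
    intro T T' t hT hT'
    have hsub : ∀ S, min T T' ≤ S → Ioo (-min T T') (min T T') ⊆ Ioo (-S) S :=
      fun S hS ↦ Ioo_subset_Ioo (neg_le_neg hS) hS
    have hpos : 0 < min T T' := (abs_nonneg t).trans_lt (lt_min hT hT')
    exact ODE_solution_unique_of_mem_Ioo (v := fun _ ↦ F) (s := fun _ ↦ univ)
      (fun _ _ ↦ hF.lipschitzOnWith) ⟨neg_lt_zero.2 hpos, hpos⟩
      (fun u hu ↦ ⟨hγ T u (hsub T (min_le_left _ _) hu), trivial⟩)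
      (fun u hu ↦ ⟨hγ T' u (hsub T' (min_le_right _ _) hu), trivial⟩)
      (by rw [hγ₀, hγ₀]) (abs_lt.1 (lt_min hT hT'))
  refine ⟨fun t ↦ γ (|t| + 1) t, hγ₀ _, fun t ↦ ?_⟩
  have ht : t ∈ Ioo (-(|t| + 1)) (|t| + 1) := abs_lt.1 (lt_add_one _)
  refine (hγ _ t ht).congr_of_eventuallyEq ?_
  filter_upwards [isOpen_Ioo.mem_nhds ht] with u hu
  exact hagree _ _ u (lt_add_one _) (abs_lt.2 hu)

end ODE

theorem image_le_of_deriv_right_nonpos_of_lt {f f' : ℝ → ℝ} {a b B : ℝ}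
    (hf : ContinuousOn f (Icc a b)) (hf' : ∀ x ∈ Ico a b, HasDerivWithinAt f (f' x) (Ici x) x)
    (ha : f a ≤ B) (bound : ∀ x ∈ Ico a b, B < f x → f' x ≤ 0) :
    ∀ ⦃x⦄, x ∈ Icc a b → f x ≤ B := by
  intro x hx
  -- The barriers `B + r (y - a + 1)` lie strictly above `B` on `[a, b]`, so `bound` applies
  -- wherever `f` touches one.
  have hbarrier : ∀ r > 0, f x ≤ B + r * (x - a + 1) := by
    intro r hr
    have hderiv : ∀ y, HasDerivAt (fun y ↦ B + r * (y - a + 1)) r y := fun y ↦ by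
      simpa using (((hasDerivAt_id y).sub_const a).add_const 1).const_mul r |>.const_add B
    refine image_le_of_deriv_right_lt_deriv_boundary hf hf' (by linarith) hderiv
      (fun y hy hfy ↦ (bound y hy ?_).trans_lt hr) hx
    nlinarith [hy.1]
  refine le_of_forall_pos_le_add fun ε hε ↦ ?_
  have hlen : 0 < x - a + 1 := by linarith [hx.1]
  simpa [div_mul_cancel₀ _ hlen.ne'] using hbarrier (ε / (x - a + 1)) (by positivity)

theorem mem_Icc_of_hasDerivAt_of_inward {f f' : ℝ → ℝ} {lo hi t₀ : ℝ}
    (hf : ∀ t, HasDerivAt f (f' t) t) (h₀ : f t₀ ∈ Icc lo hi)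
    (hlo : ∀ t, f t < lo → 0 ≤ f' t) (hhi : ∀ t, hi < f t → f' t ≤ 0) {t : ℝ} (ht : t₀ ≤ t) :
    f t ∈ Icc lo hi := by
  have hcont : Continuous f := continuous_iff_continuousAt.2 fun t ↦ (hf t).continuousAt
  constructor
  · have := image_le_of_deriv_right_nonpos_of_lt (f := fun s ↦ -f s) (hcont.neg.continuousOn)
      (fun s _ ↦ (hf s).neg.hasDerivWithinAt) (neg_le_neg h₀.1)
      (fun s _ hs ↦ neg_nonpos.2 (hlo s (neg_lt_neg_iff.1 hs))) ⟨ht, le_rfl⟩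
    exact neg_le_neg_iff.1 this
  · exact image_le_of_deriv_right_nonpos_of_lt hcont.continuousOn
      (fun s _ ↦ (hf s).hasDerivWithinAt) h₀.2 (fun s _ ↦ hhi s) ⟨ht, le_rfl⟩

theorem ContDiffOn.exists_lipschitzWith_comp {E G : Type*} [NormedAddCommGroup E]
    [NormedSpace ℝ E] [NormedAddCommGroup G] [NormedSpace ℝ G] {X : Type*} [PseudoEMetricSpace X]
    {s : Set E} {f : E → G} {g : X → E} {Kg : NNReal} (hf : ContDiffOn ℝ 1 f s) (hs : Convex ℝ s)
    (hs' : IsCompact s) (hg : LipschitzWith Kg g) (hgs : ∀ x, g x ∈ s) :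
    ∃ K, LipschitzWith K (f ∘ g) := by
  obtain ⟨K, hK⟩ := hf.exists_lipschitzOnWith one_ne_zero hs hs'
  exact ⟨K * Kg, lipschitzOnWith_univ.1 (hK.comp hg.lipschitzOnWith fun x _ ↦ hgs x)⟩

section Box

variable {ι : Type*}

def piProjIcc (a b q : ι → ℝ) : ι → ℝ := fun i ↦ max (a i) (min (q i) (b i))

variable {a b q : ι → ℝ}

theorem piProjIcc_mem (h : a ≤ b) (q : ι → ℝ) : piProjIcc a b q ∈ Icc a b :=
  ⟨fun _ ↦ le_max_left _ _, fun i ↦ max_le (h i) (min_le_right _ _)⟩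

theorem piProjIcc_of_mem (hq : q ∈ Icc a b) : piProjIcc a b q = q :=
  funext fun i ↦ by simp [piProjIcc, hq.1 i, hq.2 i]

theorem piProjIcc_apply_of_le (h : a ≤ b) {i : ι} (hi : b i ≤ q i) : piProjIcc a b q i = b i := by
  simp [piProjIcc, hi, h i]

theorem lipschitzWith_piProjIcc [Fintype ι] (a b : ι → ℝ) : LipschitzWith 1 (piProjIcc a b) :=
  LipschitzWith.of_dist_le_mul fun p q ↦ (dist_pi_le_iff (by positivity)).2 fun i ↦
    (((LipschitzWith.eval i).min_const (b i)).const_max (a i)).dist_le_mul p q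

end Box

section Proliferation

variable {ι : Type*} [Fintype ι] (A : ι → ι → ℝ) (w : ι → ℝ)

/-- The particle scheme with interaction matrix `Aᵢⱼ = L(xᵢ, xⱼ)`. -/
def proliferationField (q : ι → ℝ) : ι → ℝ := fun i ↦ (w i - q i) * ∑ j, A i j * q j

theorem contDiff_proliferationField {n : WithTop ℕ∞} : ContDiff ℝ n (proliferationField A w) :=
  contDiff_pi.2 fun i ↦ by unfold proliferationField; fun_prop

variable {A w}

theorem proliferationField_nonneg (hA : ∀ i j, 0 ≤ A i j) {q : ι → ℝ} (hq : q ∈ Icc 0 w) :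
    0 ≤ proliferationField A w q := fun i ↦
  mul_nonneg (sub_nonneg.2 (hq.2 i)) (Finset.sum_nonneg fun j _ ↦ mul_nonneg (hA i j) (hq.1 j))

theorem proliferationField_apply_of_eq {q : ι → ℝ} {i : ι} (hi : q i = w i) :
    proliferationField A w q i = 0 := by
  simp [proliferationField, hi]

theorem exists_solution_proliferationField (hA : ∀ i j, 0 ≤ A i j) {m₀ : ι → ℝ}
    (hm₀ : m₀ ∈ Icc 0 w) :
    ∃ m : ℝ → ι → ℝ, m 0 = m₀ ∧
      ∀ t, 0 ≤ t → HasDerivAt m (proliferationField A w (m t)) t ∧ m t ∈ Icc 0 w := by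
  have hw : 0 ≤ w := hm₀.1.trans hm₀.2
  set G := proliferationField A w ∘ piProjIcc 0 w
  obtain ⟨K, hK⟩ : ∃ K, LipschitzWith K G :=
    (contDiff_proliferationField A w).contDiffOn.exists_lipschitzWith_comp (convex_Icc 0 w)
      isCompact_Icc (lipschitzWith_piProjIcc 0 w) (piProjIcc_mem hw)
  obtain ⟨B, hB⟩ := isCompact_Icc.exists_bound_of_continuousOn
    (contDiff_proliferationField (n := 0) A w).continuous.continuousOn (s := Icc 0 w)
  obtain ⟨m, hm₀', hm⟩ := exists_isIntegralCurve_of_lipschitzWith_of_norm_le hK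
    (B := B.toNNReal) (fun q ↦ (hB _ (piProjIcc_mem hw q)).trans (Real.le_coe_toNNReal B)) m₀
  have hbox : ∀ t, 0 ≤ t → m t ∈ Icc 0 w := fun t ht ↦ by
    have hcoord : ∀ i, m t i ∈ Icc (0 : ℝ) (w i) := fun i ↦
      mem_Icc_of_hasDerivAt_of_inward (fun s ↦ hasDerivAt_pi.1 (hm s) i)
        ⟨hm₀' ▸ hm₀.1 i, hm₀' ▸ hm₀.2 i⟩
        (fun s _ ↦ proliferationField_nonneg hA (piProjIcc_mem hw _) i)
        (fun s hs ↦ (proliferationField_apply_of_eq (piProjIcc_apply_of_le hw hs.le)).le) ht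
    exact ⟨fun i ↦ (hcoord i).1, fun i ↦ (hcoord i).2⟩
  refine ⟨m, hm₀', fun t ht ↦ ⟨?_, hbox t ht⟩⟩
  simpa [G, piProjIcc_of_mem (hbox t ht)] using hm t

end Proliferation

theorem particle_scheme_global_existence_invariance_general
    (N : ℕ) (x : Fin N → ℝ)
    (L : ℝ → ℝ → ℝ) (hLnonneg : ∀ R r, 0 ≤ L R r)
    (w : Fin N → ℝ)
    (m₀ : Fin N → ℝ) (hm₀ : ∀ i, 0 ≤ m₀ i ∧ m₀ i ≤ w i) :
    ∃ m : ℝ → Fin N → ℝ,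
      (∀ i, m 0 i = m₀ i) ∧
      (∀ t ≥ (0:ℝ), ∀ i, HasDerivAt (fun s => m s i)
        ((w i - m t i) * ∑ j, L (x i) (x j) * m t j) t) ∧
      (∀ t ≥ (0:ℝ), ∀ i, 0 ≤ m t i ∧ m t i ≤ w i) := by
  obtain ⟨m, hm₀', hm⟩ := exists_solution_proliferationField (A := fun i j ↦ L (x i) (x j))
    (fun _ _ ↦ hLnonneg _ _) ⟨fun i ↦ (hm₀ i).1, fun i ↦ (hm₀ i).2⟩
  refine ⟨m, fun i ↦ by rw [hm₀'], fun t ht i ↦ hasDerivAt_pi.1 (hm t ht).1 i,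
    fun t ht i ↦ ⟨(hm t ht).2.1 i, (hm t ht).2.2 i⟩⟩

/-- Well-posedness and invariance of the particle (EBT) scheme: the ODE system
`mᵢ' = (wᵢ - mᵢ) ∑ⱼ L(xᵢ,xⱼ) mⱼ` with `0 ≤ mᵢ(0) ≤ wᵢ` has a global-in-time solution
satisfying `0 ≤ mᵢ(t) ≤ wᵢ` for all `t ≥ 0`. -/
theorem particle_scheme_global_existence_invariance
    (N : ℕ) (x : Fin N → ℝ) (hx : ∀ i, 0 ≤ x i)
    (L : ℝ → ℝ → ℝ) (K : ℝ) (hLnonneg : ∀ R r, 0 ≤ L R r)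
    (hLbound : ∀ R r, L R r ≤ K)
    (hLLip : ∃ C : NNReal, LipschitzWith C (fun p : ℝ × ℝ => L p.1 p.2))
    (w : Fin N → ℝ) (hw : ∀ i, 0 ≤ w i)
    (m₀ : Fin N → ℝ) (hm₀ : ∀ i, 0 ≤ m₀ i ∧ m₀ i ≤ w i) :
    ∃ m : ℝ → Fin N → ℝ,
      (∀ i, m 0 i = m₀ i) ∧
      (∀ t ≥ (0:ℝ), ∀ i, HasDerivAt (fun s => m s i)
        ((w i - m t i) * ∑ j, L (x i) (x j) * m t j) t) ∧
      (∀ t ≥ (0:ℝ), ∀ i, 0 ≤ m t i ∧ m t i ≤ w i) :=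
  particle_scheme_global_existence_invariance_general N x L hLnonneg w m₀ hm₀
end
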